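/- arXiv:1112.4036 — 7 statements merged into one kernel-verified Lean document; each statement's English description precedes it below -/
import Mathlib

section
/- The spectrum of J consists exactly of the n+2 pairwise distinct real numbers λ_0 = 1, λ_m = 2√(pq)·cos(mπ/(n+1)) for m = 1,…,n, and λ_{n+1} = −1. -/
open Filter Finset

/-- The `(n+2) × (n+2)` Jacobi matrix of the reflected random walk on the path:
zero diagonal, `J(0,1) = √q`, `J(i,i+1) = √(pq)` for `1 ≤ i ≤ n-1`, `J(n,n+1) = √p`,
and symmetric. -/
noncomputable def jacobiM (p q : ℝ) (n : ℕ) : Matrix (Fin (n + 2)) (Fin (n + 2)) ℝ :=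
  fun k l =>
    if k.1 + 1 = l.1 then
      (if k.1 = 0 then Real.sqrt q else if k.1 = n then Real.sqrt p else Real.sqrt (p * q))
    else if l.1 + 1 = k.1 then
      (if l.1 = 0 then Real.sqrt q else if l.1 = n then Real.sqrt p else Real.sqrt (p * q))
    else 0

/-- The claimed eigenvalues of `J`: `λ_0 = 1`, `λ_m = 2√(pq)·cos(mπ/(n+1))` for
`1 ≤ m ≤ n`, and `λ_{n+1} = -1`. -/
noncomputable def jacobiEigenvalue (p q : ℝ) (n : ℕ) (m : Fin (n + 2)) : ℝ :=
  if m.1 = 0 then 1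
  else if m.1 = n + 1 then -1
  else 2 * Real.sqrt (p * q) * Real.cos (m.1 * Real.pi / (n + 1))

open Matrix Real

/-!
We look for eigenvectors of the form `(√p g₀, g₁, …, gₙ, √q gₙ₊₁)`. In the rows `1, …, n` the
eigen-equation `J v = λ v` becomes the recurrence `√(pq) (g_{i-1} + g_{i+1}) = λ g_i`, and the two
boundary rows become boundary conditions on `g`. For `λ = ±1` they are solved by the geometric
sequences `g_i = (±√p/√q)^i`; for `λ = 2√(pq) cos θ` with `θ = mπ/(n+1)` by
`g_i = sin((i+1)θ) - 2q cos θ sin(iθ)`, the multiple of `sin(iθ)` being fixed by the first row and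
the last row holding because `sin((n+1)θ) = 0`.
The `n+2` eigenvalues are strictly decreasing in `m`, since cosine decreases on `[0, π]` and
`2√(pq) ≤ p + q = 1`. Eigenvectors for distinct eigenvalues are linearly independent, so in dimension
`n+2` there is no room for a further eigenvalue.
-/

theorem Module.End.spectrum_eq_range_of_hasEigenvalue {K V ι : Type*} [Field K] [AddCommGroup V]
    [Module K V] [FiniteDimensional K V] [Fintype ι] {f : Module.End K V} {μ : ι → K}
    (hμ : Function.Injective μ) (hcard : Module.finrank K V ≤ Fintype.card ι)
    (h : ∀ i, f.HasEigenvalue (μ i)) :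
    spectrum K f = Set.range μ := by
  ext ν
  rw [← Module.End.hasEigenvalue_iff_mem_spectrum]
  refine ⟨fun hν => ?_, fun ⟨i, hi⟩ => hi ▸ h i⟩
  by_contra hνμ
  obtain ⟨w, hw⟩ := hν.exists_hasEigenvector
  choose v hv using fun i => (h i).exists_hasEigenvector
  have hinj : Function.Injective fun o : Option ι => o.elim ν μ := by
    rintro (_ | i) (_ | j) hij
    exacts [rfl, (hνμ ⟨j, hij.symm⟩).elim, (hνμ ⟨i, hij⟩).elim, congrArg some (hμ hij)]
  have hli := f.eigenvectors_linearIndependent' _ hinj (fun o => o.elim w v)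
    (by rintro (_ | i); exacts [hw, hv i])
  have hcard' := hli.fintype_card_le_finrank
  simp only [Fintype.card_option] at hcard'
  omega

theorem Matrix.hasEigenvalue_toLin'_of_mulVec_eq_smul {K ι : Type*} [Field K] [Fintype ι]
    [DecidableEq ι] {A : Matrix ι ι K} {v : ι → K} {μ : K} (h : A *ᵥ v = μ • v) (hv : v ≠ 0) :
    Module.End.HasEigenvalue (toLin' A) μ :=
  Module.End.hasEigenvalue_of_hasEigenvector
    ⟨Module.End.mem_eigenspace_iff.mpr ((toLin'_apply A v).trans h), hv⟩

theorem sin_mul_add_sin_add_two_mul (x θ : ℝ) :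
    sin (x * θ) + sin ((x + 2) * θ) = 2 * cos θ * sin ((x + 1) * θ) := by
  rw [show x * θ = (x + 1) * θ - θ by ring, show (x + 2) * θ = (x + 1) * θ + θ by ring,
    sin_add, sin_sub]
  ring

theorem nat_mul_pi_div_mem_Icc {m n : ℕ} (hm : m ≤ n + 1) :
    (m : ℝ) * π / (n + 1) ∈ Set.Icc 0 π := by
  refine ⟨by positivity, div_le_of_le_mul₀ (by positivity) pi_pos.le ?_⟩
  rw [mul_comm]
  gcongr
  exact_mod_cast hm

def symmTridiag {R : Type*} [Zero R] (N : ℕ) (c : ℕ → R) : Matrix (Fin N) (Fin N) R :=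
  fun k l => if k.1 + 1 = l.1 then c k else if l.1 + 1 = k.1 then c l else 0

theorem symmTridiag_mulVec_apply {R : Type*} [NonUnitalNonAssocSemiring R] {N : ℕ}
    (c w : ℕ → R) (k : Fin N) :
    (symmTridiag N c *ᵥ fun i => w i) k =
      (if 1 ≤ k.1 then c (k - 1) * w (k - 1) else 0) +
        (if k.1 + 1 < N then c k * w (k + 1) else 0) := by
  have hrow : ∀ l : ℕ, (if k.1 + 1 = l then c k else if l + 1 = k.1 then c l else 0) * w l =
      (if l = k.1 + 1 then c k * w l else 0) + (if l + 1 = k.1 then c l * w l else 0) := by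
    intro l
    split_ifs <;> first | omega | simp
  simp only [Matrix.mulVec, dotProduct, symmTridiag]
  rw [Fin.sum_univ_eq_sum_range (fun l => (if k.1 + 1 = l then c k else
    if l + 1 = k.1 then c l else 0) * w l), Finset.sum_congr rfl fun l _ => hrow l,
    Finset.sum_add_distrib, Finset.sum_ite_eq', add_comm]
  congr 1
  · rcases k with ⟨_ | j, hj⟩
    · simp
    · rw [Finset.sum_eq_single j] <;> simp +contextual; omega
  · simp [Finset.mem_range]

def jacobiCoeff {R : Type*} [Mul R] (n : ℕ) (a b : R) (i : ℕ) : R :=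
  if i = 0 then a else if i = n then b else a * b

def jacobiVec {R : Type*} [Mul R] (n : ℕ) (a b : R) (g : ℕ → R) (i : ℕ) : R :=
  if i = 0 then b * g 0 else if i = n + 1 then a * g (n + 1) else g i

theorem jacobiM_eq_symmTridiag {p q : ℝ} (n : ℕ) (hq : 0 ≤ q) :
    jacobiM p q n = symmTridiag (n + 2) (jacobiCoeff n (√q) (√p)) := by
  ext k l
  simp only [jacobiM, symmTridiag, jacobiCoeff, mul_comm p q, Real.sqrt_mul hq]

theorem jacobiVec_ne_zero {R : Type*} [MulZeroClass R] [NoZeroDivisors R] {n : ℕ} {a b : R}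
    {g : ℕ → R} (hb : b ≠ 0) (hg : g 0 ≠ 0) :
    (fun i : Fin (n + 2) => jacobiVec n a b g i) ≠ 0 :=
  fun h => mul_ne_zero hb hg (by simpa [jacobiVec] using congrFun h 0)

section
variable {R : Type*} [CommRing R] {n : ℕ} {a b : R} {g : ℕ → R}

theorem jacobiCoeff_mul_jacobiVec_self {i : ℕ} (hi : i < n) :
    jacobiCoeff n a b i * jacobiVec n a b g i = a * b * g i := by
  rw [jacobiCoeff, jacobiVec]
  split_ifs <;> subst_vars <;> first | omega | contradiction | ring

theorem jacobiCoeff_mul_jacobiVec_succ {i : ℕ} (hi : 1 ≤ i) (hin : i ≤ n) :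
    jacobiCoeff n a b i * jacobiVec n a b g (i + 1) = a * b * g (i + 1) := by
  rw [jacobiCoeff, jacobiVec]
  split_ifs <;> subst_vars <;> first | omega | contradiction | ring

theorem symmTridiag_jacobiCoeff_mulVec (hn : 1 ≤ n) {μ : R}
    (hbot : a * g 1 = μ * (b * g 0))
    (hrec : ∀ i < n, a * b * (g i + g (i + 2)) = μ * g (i + 1))
    (htop : b * g n = μ * (a * g (n + 1))) :
    symmTridiag (n + 2) (jacobiCoeff n a b) *ᵥ (fun i : Fin (n + 2) => jacobiVec n a b g i) =
      μ • fun i : Fin (n + 2) => jacobiVec n a b g i := by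
  funext ⟨k, hk⟩
  rw [symmTridiag_mulVec_apply, Pi.smul_apply, smul_eq_mul]
  obtain rfl | ⟨i, rfl, hi⟩ | rfl : k = 0 ∨ (∃ i, k = i + 1 ∧ i < n) ∨ k = n + 1 := by
    rcases k with _ | i
    · exact .inl rfl
    · exact if h : i < n then .inr (.inl ⟨i, rfl, h⟩) else .inr (.inr (by omega))
  · simpa [jacobiCoeff, jacobiVec, show n ≠ 0 by omega] using hbot
  · simp only [le_add_iff_nonneg_left, zero_le, if_true, add_tsub_cancel_right,
      show i + 1 + 1 < n + 2 by omega, jacobiCoeff_mul_jacobiVec_self hi,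
      jacobiCoeff_mul_jacobiVec_succ le_add_self (by omega : i + 1 ≤ n)]
    simpa [jacobiVec, mul_add, hi.ne] using hrec i hi
  · simpa [jacobiCoeff, jacobiVec, show n ≠ 0 by omega] using htop

theorem symmTridiag_jacobiCoeff_mulVec_pow (hn : 1 ≤ n) {e x : R} (hab : a ^ 2 + b ^ 2 = 1)
    (he : e ^ 2 = 1) (hx : a * x = e * b) :
    symmTridiag (n + 2) (jacobiCoeff n a b) *ᵥ
        (fun i : Fin (n + 2) => jacobiVec n a b (x ^ ·) i) =
      e • fun i : Fin (n + 2) => jacobiVec n a b (x ^ ·) i := by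
  apply symmTridiag_jacobiCoeff_mulVec hn
  · linear_combination hx
  · intro i _
    linear_combination x ^ i * ((b * x - e * a) * hx - a * b * he + e * x * hab)
  · linear_combination (-e * x ^ n) * hx - (b * x ^ n) * he

end

theorem symmTridiag_jacobiCoeff_mulVec_sin {n : ℕ} (hn : 1 ≤ n) {a b θ : ℝ}
    (hab : a ^ 2 + b ^ 2 = 1) (hθ : sin ((n + 1) * θ) = 0) :
    symmTridiag (n + 2) (jacobiCoeff n a b) *ᵥ (fun i : Fin (n + 2) =>
        jacobiVec n a b (fun k => sin ((k + 1) * θ) - 2 * a ^ 2 * cos θ * sin (k * θ)) i) =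
      (2 * a * b * cos θ) • fun i : Fin (n + 2) =>
        jacobiVec n a b (fun k => sin ((k + 1) * θ) - 2 * a ^ 2 * cos θ * sin (k * θ)) i := by
  apply symmTridiag_jacobiCoeff_mulVec hn
  · norm_num [sin_two_mul]
    linear_combination (-2 * a * sin θ * cos θ) * hab
  · intro i _
    have h₀ := sin_mul_add_sin_add_two_mul i θ
    have h₁ := sin_mul_add_sin_add_two_mul (i + 1) θ
    push_cast
    ring_nf at h₀ h₁ ⊢
    linear_combination (a * b) * h₁ - (2 * a ^ 3 * b * cos θ) * h₀
  · have h := sin_mul_add_sin_add_two_mul n θ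
    push_cast at h ⊢
    rw [hθ] at h ⊢
    ring_nf at h ⊢
    linear_combination (-2 * a ^ 2 * b * cos θ) * h

section
variable {p q : ℝ} {n : ℕ}

theorem jacobiM_hasEigenvalue (hn : 1 ≤ n) (hp : 0 < p) (hq : 0 < q) (hpq : p + q = 1)
    (m : Fin (n + 2)) :
    Module.End.HasEigenvalue (toLin' (jacobiM p q n)) (jacobiEigenvalue p q n m) := by
  rw [jacobiM_eq_symmTridiag n hq.le]
  set a := √q
  set b := √p
  have ha : a ≠ 0 := (Real.sqrt_pos.mpr hq).ne'
  have hb : b ≠ 0 := (Real.sqrt_pos.mpr hp).ne'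
  have hab : a ^ 2 + b ^ 2 = 1 := by
    rw [Real.sq_sqrt hq.le, Real.sq_sqrt hp.le, add_comm, hpq]
  by_cases hm0 : m.1 = 0
  · rw [jacobiEigenvalue, if_pos hm0]
    refine hasEigenvalue_toLin'_of_mulVec_eq_smul
      (symmTridiag_jacobiCoeff_mulVec_pow hn hab (one_pow 2) (x := b / a) ?_)
      (jacobiVec_ne_zero hb (by simp))
    field_simp
  by_cases hmn : m.1 = n + 1
  · rw [jacobiEigenvalue, if_neg hm0, if_pos hmn]
    refine hasEigenvalue_toLin'_of_mulVec_eq_smul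
      (symmTridiag_jacobiCoeff_mulVec_pow hn hab (by norm_num) (x := -b / a) ?_)
      (jacobiVec_ne_zero hb (by simp))
    field_simp
  set θ := (m.1 : ℝ) * π / (n + 1)
  have hm_pos : (0 : ℝ) < m.1 := by exact_mod_cast Nat.pos_of_ne_zero hm0
  have hm_lt : (m.1 : ℝ) < n + 1 := by exact_mod_cast (by omega : m.1 < n + 1)
  have hθ : θ ∈ Set.Ioo 0 π :=
    ⟨by positivity, by rw [div_lt_iff₀ (by positivity)]; nlinarith [pi_pos]⟩
  have hsin : sin ((n + 1) * θ) = 0 := by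
    rw [show ((n : ℝ) + 1) * θ = m.1 * π by simp only [θ]; field_simp]
    exact sin_nat_mul_pi m.1
  rw [jacobiEigenvalue, if_neg hm0, if_neg hmn, Real.sqrt_mul hp.le,
    show 2 * (b * a) = 2 * a * b by ring]
  refine hasEigenvalue_toLin'_of_mulVec_eq_smul (symmTridiag_jacobiCoeff_mulVec_sin hn hab hsin)
    (jacobiVec_ne_zero hb ?_)
  simpa using (sin_pos_of_pos_of_lt_pi hθ.1 hθ.2).ne'

theorem jacobiEigenvalue_strictAnti (hp : 0 < p) (hq : 0 < q) (hpq : p + q = 1) :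
    StrictAnti (jacobiEigenvalue p q n) := by
  have hc1 : 2 * √(p * q) ≤ 1 := by
    rw [Real.sqrt_mul hp.le]
    nlinarith [sq_nonneg (√p - √q), Real.sq_sqrt hp.le, Real.sq_sqrt hq.le]
  set c := 2 * √(p * q)
  have hc : 0 < c := by positivity
  set f : ℕ → ℝ := fun m => c * cos (m * π / (n + 1))
  have hf {i j : ℕ} (hij : i < j) (hj : j ≤ n + 1) : f j < f i := by
    refine mul_lt_mul_of_pos_left (strictAntiOn_cos (nat_mul_pi_div_mem_Icc (by omega))
      (nat_mul_pi_div_mem_Icc hj) ?_) hc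
    gcongr
  have hle (i : Fin (n + 2)) (hi : i.1 ≠ n + 1) : f i ≤ jacobiEigenvalue p q n i := by
    by_cases hi0 : i.1 = 0
    · simpa [f, jacobiEigenvalue, hi0] using hc1
    · simp [f, jacobiEigenvalue, hi0, hi, c]
  have hge (j : Fin (n + 2)) (hj : j.1 ≠ 0) : jacobiEigenvalue p q n j ≤ f j := by
    by_cases hjn : j.1 = n + 1
    · have hπ : ((n + 1 : ℕ) : ℝ) * π / (n + 1) = π := by push_cast; field_simp
      rw [jacobiEigenvalue, if_neg hj, if_pos hjn]
      simp only [f, hjn, hπ, cos_pi]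
      linarith
    · simp [f, jacobiEigenvalue, hj, hjn, c]
  intro i j hij
  calc jacobiEigenvalue p q n j ≤ f j := hge j (by omega)
    _ < f i := hf hij (by omega)
    _ ≤ jacobiEigenvalue p q n i := hle i (by omega)

end

theorem jacobiM_spectrum_general (n : ℕ) (hn : 1 ≤ n)
    (p q : ℝ) (hp0 : 0 < p) (hq0 : 0 < q) (hpq : p + q = 1) :
    spectrum ℝ (jacobiM p q n) = Set.range (jacobiEigenvalue p q n) ∧
      Function.Injective (jacobiEigenvalue p q n) := by
  have hinj := (jacobiEigenvalue_strictAnti (n := n) hp0 hq0 hpq).injective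
  refine ⟨?_, hinj⟩
  rw [← spectrum_toLin']
  exact Module.End.spectrum_eq_range_of_hasEigenvalue hinj (by simp)
    (jacobiM_hasEigenvalue hn hp0 hq0 hpq)

/-- **Lemma (spectrum of the Jacobi matrix).** The spectrum of `J` consists exactly of the
`n+2` pairwise distinct real numbers `λ_0 = 1`, `λ_m = 2√(pq)·cos(mπ/(n+1))`
(`m = 1,…,n`), and `λ_{n+1} = -1`. -/
theorem jacobiM_spectrum (n : ℕ) (hn : 1 ≤ n)
    (p q : ℝ) (hp0 : 0 < p) (hp1 : p < 1) (hq0 : 0 < q) (hq1 : q < 1) (hpq : p + q = 1) :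
    spectrum ℝ (jacobiM p q n) = Set.range (jacobiEigenvalue p q n) ∧
      Function.Injective (jacobiEigenvalue p q n) :=
  jacobiM_spectrum_general n hn p q hp0 hq0 hpq
end

section
/- The vector w ∈ ℝ^{n+2} with components w(0) = 1, w(j) = (1/√q)·(√(p/q))^{j−1} for 1 ≤ j ≤ n, and w(n+1) = (√(p/q))^n satisfies J w = w; i.e., w is an eigenvector of J for the eigenvalue 1. -/
open Filter Finset

/-- The vector `w` with `w(0) = 1`, `w(j) = (1/√q)·(√(p/q))^(j-1)` for `1 ≤ j ≤ n`,
and `w(n+1) = (√(p/q))^n`. -/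
noncomputable def wVec (p q : ℝ) (n : ℕ) : Fin (n + 2) → ℝ :=
  fun j =>
    if j.1 = 0 then 1
    else if j.1 = n + 1 then (Real.sqrt (p / q)) ^ n
    else (1 / Real.sqrt q) * (Real.sqrt (p / q)) ^ (j.1 - 1)

/-!
`J` is the symmetrization `√(P i j * P j i)` of the transition matrix `P` of the random walk on
`{0, …, n+1}` that steps up with probability `p` and down with probability `q`, and is reflected at
both ends; `w ^ 2` is a reversible measure for `P`. For any stochastic `P` in detailed balance with
`π`, the vector `√π` is fixed by the symmetrization: detailed balance turns
`√(P i j * P j i) * √(π j)` into `P i j * √(π i)`, and the row sums of `P` are `1`.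
-/

namespace Matrix

theorem mulVec_eq_self_of_detailedBalance {ι : Type*} [Fintype ι] {P : Matrix ι ι ℝ}
    {v : ι → ℝ} (hP : ∀ i j, 0 ≤ P i j) (hv : ∀ i, 0 ≤ v i)
    (hbal : ∀ i j, v i ^ 2 * P i j = v j ^ 2 * P j i) (hrow : ∀ i, ∑ j, P i j = 1) :
    (of fun i j => √(P i j * P j i)) *ᵥ v = v := by
  funext i
  have hterm : ∀ j, √(P i j * P j i) * v j = P i j * v i := fun j => by
    calc √(P i j * P j i) * v j = √(P i j * P j i * v j ^ 2) := by
          rw [Real.sqrt_mul (mul_nonneg (hP i j) (hP j i)), Real.sqrt_sq (hv j)]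
      _ = √((P i j * v i) ^ 2) := by
          congr 1
          linear_combination (-P i j) * hbal i j
      _ = P i j * v i := Real.sqrt_sq (mul_nonneg (hP i j) (hv i))
  simp only [mulVec, dotProduct, of_apply, hterm, ← Finset.sum_mul, hrow, one_mul]

end Matrix

def birthDeath (up down : ℕ → ℝ) (m : ℕ) : Matrix (Fin m) (Fin m) ℝ :=
  Matrix.of fun k l => if k.1 + 1 = l.1 then up k else if l.1 + 1 = k.1 then down k else 0

section birthDeath

variable {up down : ℕ → ℝ} {m : ℕ}

theorem birthDeath_nonneg (hup : ∀ k, 0 ≤ up k) (hdown : ∀ k, 0 ≤ down k) (k l : Fin m) :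
    0 ≤ birthDeath up down m k l := by
  unfold birthDeath
  simp only [Matrix.of_apply]
  split_ifs <;> simp [hup, hdown]

theorem sum_birthDeath (k : Fin m) :
    ∑ l, birthDeath up down m k l =
      (if k.1 + 1 < m then up k else 0) + (if k.1 ≠ 0 then down k else 0) := by
  have hsplit : ∀ l : Fin m, birthDeath up down m k l =
      (if k.1 + 1 = l.1 then up k else 0) + (if l.1 + 1 = k.1 then down k else 0) := fun l => by
    unfold birthDeath
    simp only [Matrix.of_apply]
    split_ifs <;> first | omega | simp
  simp only [hsplit, Finset.sum_add_distrib]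
  congr 1
  · rw [Fin.sum_univ_eq_sum_range (fun l => if k.1 + 1 = l then up k else 0), Finset.sum_ite_eq]
    simp only [Finset.mem_range]
  · rcases k with ⟨_ | j, hj⟩
    · simp
    · simp only [Nat.add_right_cancel_iff, ne_eq, Nat.add_one_ne_zero, not_false_eq_true, if_true]
      rw [Fin.sum_univ_eq_sum_range (fun l => if l = j then down (j + 1) else 0),
        Finset.sum_ite_eq', if_pos (Finset.mem_range.mpr (by omega))]

theorem birthDeath_detailedBalance {π : Fin m → ℝ}
    (hπ : ∀ k l : Fin m, k.1 + 1 = l.1 → π k * up k = π l * down l) (k l : Fin m) :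
    π k * birthDeath up down m k l = π l * birthDeath up down m l k := by
  unfold birthDeath
  simp only [Matrix.of_apply]
  split_ifs with hup hdown hdown
  · omega
  · exact hπ k l hup
  · exact (hπ l k hdown).symm
  · simp

theorem sqrt_birthDeath_mul_birthDeath (k l : Fin m) :
    √(birthDeath up down m k l * birthDeath up down m l k) =
      if k.1 + 1 = l.1 then √(up k * down l)
      else if l.1 + 1 = k.1 then √(up l * down k) else 0 := by
  unfold birthDeath
  simp only [Matrix.of_apply]
  split_ifs <;> first | omega | simp [mul_comm]

end birthDeath

def reflectedWalk (p q : ℝ) (n : ℕ) : Matrix (Fin (n + 2)) (Fin (n + 2)) ℝ :=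
  birthDeath (fun k => if k = 0 then 1 else p) (fun k => if k = n + 1 then 1 else q) (n + 2)

section reflectedWalk

variable {p q : ℝ} {n : ℕ}

theorem reflectedWalk_nonneg (hp : 0 ≤ p) (hq : 0 ≤ q) (k l : Fin (n + 2)) :
    0 ≤ reflectedWalk p q n k l :=
  birthDeath_nonneg (fun _ => by split_ifs <;> positivity) (fun _ => by split_ifs <;> positivity) k l

theorem sum_reflectedWalk (hpq : p + q = 1) (k : Fin (n + 2)) :
    ∑ l, reflectedWalk p q n k l = 1 := by
  rw [reflectedWalk, sum_birthDeath]
  have := k.2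
  split_ifs <;> first | omega | simp

theorem jacobiM_eq_sqrt_reflectedWalk (hn : 1 ≤ n) :
    jacobiM p q n = Matrix.of fun k l => √(reflectedWalk p q n k l * reflectedWalk p q n l k) := by
  ext k l
  rw [Matrix.of_apply, reflectedWalk, sqrt_birthDeath_mul_birthDeath]
  have := k.2
  have := l.2
  unfold jacobiM
  split_ifs <;> first | omega | simp

theorem wVec_nonneg (j : Fin (n + 2)) : 0 ≤ wVec p q n j := by
  unfold wVec
  split_ifs <;> positivity

theorem wVec_sq (hp : 0 ≤ p) (hq : 0 ≤ q) (j : Fin (n + 2)) :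
    wVec p q n j ^ 2 =
      if j.1 = 0 then 1 else if j.1 = n + 1 then (p / q) ^ n else 1 / q * (p / q) ^ (j.1 - 1) := by
  have hpq : 0 ≤ p / q := div_nonneg hp hq
  unfold wVec
  split_ifs <;> simp [mul_pow, ← pow_mul, pow_mul', Real.sq_sqrt hq, Real.sq_sqrt hpq]

theorem wVec_sq_detailedBalance (hn : 1 ≤ n) (hp : 0 ≤ p) (hq : 0 < q) (k l : Fin (n + 2))
    (hkl : k.1 + 1 = l.1) :
    wVec p q n k ^ 2 * (if k.1 = 0 then 1 else p) =
      wVec p q n l ^ 2 * (if l.1 = n + 1 then 1 else q) := by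
  obtain ⟨k, hk⟩ := k
  obtain ⟨l, hl⟩ := l
  simp only at hkl
  subst hkl
  rw [wVec_sq hp hq.le, wVec_sq hp hq.le]
  rcases k with _ | j
  · simp [show n ≠ 0 by omega, hq.ne']
  · simp only [Nat.add_one_ne_zero, if_false, show j + 1 ≠ n + 1 by omega, Nat.add_sub_cancel]
    split_ifs with hjn
    · obtain rfl : n = j + 1 := by omega
      rw [pow_succ]
      field_simp
    · rw [pow_succ]
      field_simp

end reflectedWalk

theorem jacobiM_mulVec_wVec_general (n : ℕ) (hn : 1 ≤ n)
    (p q : ℝ) (hp0 : 0 < p) (hq0 : 0 < q) (hpq : p + q = 1) :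
    (jacobiM p q n).mulVec (wVec p q n) = wVec p q n := by
  rw [jacobiM_eq_sqrt_reflectedWalk hn]
  exact Matrix.mulVec_eq_self_of_detailedBalance (reflectedWalk_nonneg hp0.le hq0.le) wVec_nonneg
    (birthDeath_detailedBalance (wVec_sq_detailedBalance hn hp0.le hq0)) (sum_reflectedWalk hpq)

/-- **Lemma.** `w` is an eigenvector of the Jacobi matrix `J` for the eigenvalue `1`:
`J w = w`. -/
theorem jacobiM_mulVec_wVec (n : ℕ) (hn : 1 ≤ n)
    (p q : ℝ) (hp0 : 0 < p) (hp1 : p < 1) (hq0 : 0 < q) (hq1 : q < 1) (hpq : p + q = 1) :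
    (jacobiM p q n).mulVec (wVec p q n) = wVec p q n :=
  jacobiM_mulVec_wVec_general n hn p q hp0 hq0 hpq
end

section
/- The vector w' ∈ ℝ^{n+2} with components w'(j) = (−1)^j · w(j), where w(0) = 1, w(j) = (1/√q)·(√(p/q))^{j−1} for 1 ≤ j ≤ n, and w(n+1) = (√(p/q))^n, satisfies J w' = −w'; i.e., w' is an eigenvector of J for the eigenvalue −1. -/
/-!
`J` only couples indices of opposite parity, so conjugation by `diag((-1)^j)` turns `J` into
`-J` and the claim reduces to `J w = w`. With `r = √(p/q)`, the interior values of `w` are the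
geometric sequence `r^j / √p`, and the boundary weights `√q`, `√p` of `J` exactly compensate
the boundary values `w(0) = 1`, `w(n+1) = r^n`. Hence each interior row of `J w = w` reads
`√(pq) (r^(j-1) + r^(j+1)) = r^j`, i.e. `√(pq) (r⁻¹ + r) = q + p = 1`.
-/

open Filter Finset

/-- The alternating-sign vector `w'(j) = (-1)^j · w(j)`. -/
noncomputable def wVec' (p q : ℝ) (n : ℕ) : Fin (n + 2) → ℝ :=
  fun j => (-1 : ℝ) ^ j.1 * wVec p q n j

open scoped Matrix

theorem Matrix.mulVec_apply_eq_mul_of_forall_ne {ι R : Type*} [Fintype ι]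
    [NonUnitalNonAssocSemiring R] (A : Matrix ι ι R) (v : ι → R) {k a : ι}
    (hA : ∀ l, l ≠ a → A k l = 0) : (A *ᵥ v) k = A k a * v a :=
  Finset.sum_eq_single a (fun l _ hl => by simp [hA l hl]) (by simp)

theorem Matrix.mulVec_apply_eq_add_of_forall_ne {ι R : Type*} [Fintype ι]
    [NonUnitalNonAssocSemiring R] (A : Matrix ι ι R) (v : ι → R) {k a b : ι} (hab : a ≠ b)
    (hA : ∀ l, l ≠ a → l ≠ b → A k l = 0) : (A *ᵥ v) k = A k a * v a + A k b * v b :=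
  Finset.sum_eq_add a b hab (fun l _ hl => by simp [hA l hl.1 hl.2]) (by simp) (by simp)

theorem Matrix.mulVec_neg_one_pow_mul {R : Type*} [Ring R] {m : ℕ}
    (A : Matrix (Fin m) (Fin m) R) (hA : ∀ k l : Fin m, Even (k.1 + l.1) → A k l = 0)
    (v : Fin m → R) :
    A *ᵥ (fun j => (-1) ^ j.1 * v j) = -fun k => (-1) ^ k.1 * (A *ᵥ v) k := by
  ext k
  simp only [Matrix.mulVec, dotProduct, Pi.neg_apply, Finset.mul_sum, ← Finset.sum_neg_distrib]
  refine Finset.sum_congr rfl fun l _ => ?_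
  rcases Nat.even_or_odd (k.1 + l.1) with heven | hodd
  · simp [hA k l heven]
  · have hsign : (-1 : R) ^ l.1 = -(-1) ^ k.1 := by
      have h : (-1 : R) ^ (k.1 + l.1) = -1 := hodd.neg_one_pow
      rw [pow_add] at h
      calc (-1 : R) ^ l.1 = (-1) ^ k.1 * ((-1) ^ k.1 * (-1) ^ l.1) := by
            rw [← mul_assoc, ← pow_add, ← two_mul, pow_mul]; simp
        _ = -(-1) ^ k.1 := by rw [h, mul_neg_one]
    rw [hsign, neg_mul, mul_neg, ← mul_assoc, ← mul_assoc, (Commute.neg_one_left _).pow_left]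

theorem jacobiM_apply_eq_zero {p q : ℝ} {n : ℕ} {k l : Fin (n + 2)}
    (h₁ : k.1 + 1 ≠ l.1) (h₂ : l.1 + 1 ≠ k.1) : jacobiM p q n k l = 0 := by
  simp [jacobiM, h₁, h₂]

theorem jacobiM_apply_eq_zero_of_even {p q : ℝ} {n : ℕ} {k l : Fin (n + 2)}
    (h : Even (k.1 + l.1)) : jacobiM p q n k l = 0 :=
  jacobiM_apply_eq_zero (fun e => by rw [← e] at h; grind) (fun e => by rw [← e] at h; grind)

section Eigenvector

variable {p q : ℝ} {n : ℕ}

theorem wVec_eq_of_ne_zero_of_le (hp : 0 < p) {j : Fin (n + 2)} (h₀ : j.1 ≠ 0) (hj : j.1 ≤ n) :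
    wVec p q n j = Real.sqrt (p / q) ^ j.1 / Real.sqrt p := by
  obtain ⟨i, hi⟩ : ∃ i, j.1 = i + 1 := ⟨j.1 - 1, by omega⟩
  rw [wVec, if_neg h₀, if_neg (by omega), hi, Nat.add_sub_cancel, Real.sqrt_div hp.le, pow_succ]
  field_simp

theorem jacobiM_mul_wVec_of_adj (hp : 0 < p) (hq : 0 < q) {k l : Fin (n + 2)} (hk₀ : k.1 ≠ 0)
    (hk : k.1 ≤ n) (hkl : k.1 + 1 = l.1 ∨ l.1 + 1 = k.1) :
    jacobiM p q n k l * wVec p q n l =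
      Real.sqrt (p * q) * (Real.sqrt (p / q) ^ l.1 / Real.sqrt p) := by
  rcases hkl with hkl | hkl
  · rw [jacobiM, if_pos hkl, if_neg hk₀]
    by_cases hkn : k.1 = n
    · have hl : l.1 = n + 1 := by omega
      rw [if_pos hkn, wVec, if_neg (by omega), if_pos hl, hl, Real.sqrt_mul hp.le,
        Real.sqrt_div hp.le, div_pow, div_pow]
      field_simp
      ring
    · rw [if_neg hkn, wVec_eq_of_ne_zero_of_le hp (by omega) (by omega)]
  · rw [jacobiM, if_neg (by omega), if_pos hkl]
    by_cases hl₀ : l.1 = 0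
    · rw [if_pos hl₀, wVec, if_pos hl₀, hl₀, Real.sqrt_mul hp.le]
      field_simp
    · rw [if_neg hl₀, if_neg (by omega), wVec_eq_of_ne_zero_of_le hp hl₀ (by omega)]

theorem sqrt_mul_mul_pow_add_pow (hp : 0 < p) (hq : 0 < q) (hpq : p + q = 1) (j : ℕ) :
    Real.sqrt (p * q) * (Real.sqrt (p / q) ^ j + Real.sqrt (p / q) ^ (j + 2))
      = Real.sqrt (p / q) ^ (j + 1) := by
  rw [Real.sqrt_mul hp.le, Real.sqrt_div hp.le, div_pow, div_pow, div_pow]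
  field_simp
  linear_combination Real.sqrt p ^ (j + 1) * Real.sqrt q ^ (2 * j + 2) *
    (Real.sq_sqrt hp.le + Real.sq_sqrt hq.le + hpq)

theorem jacobiM_mulVec_wVec_zero (hq : 0 < q) (hn : 1 ≤ n) :
    (jacobiM p q n *ᵥ wVec p q n) 0 = wVec p q n 0 := by
  have hsq : Real.sqrt q ≠ 0 := (Real.sqrt_pos.mpr hq).ne'
  rw [Matrix.mulVec_apply_eq_mul_of_forall_ne _ _ (a := ⟨1, by omega⟩) fun l hl =>
    jacobiM_apply_eq_zero (fun h => hl (Fin.ext h.symm)) (by simp)]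
  simp only [jacobiM, wVec, Fin.val_zero]
  simp [show n ≠ 0 by omega, hsq]

theorem jacobiM_mulVec_wVec_last (hp : 0 < p) (hn : 1 ≤ n) :
    (jacobiM p q n *ᵥ wVec p q n) (Fin.last (n + 1)) = wVec p q n (Fin.last (n + 1)) := by
  have hw : wVec p q n ⟨n, by omega⟩ = Real.sqrt (p / q) ^ n / Real.sqrt p :=
    wVec_eq_of_ne_zero_of_le hp (show n ≠ 0 by omega) le_rfl
  rw [Matrix.mulVec_apply_eq_mul_of_forall_ne _ _ (a := ⟨n, by omega⟩) fun l hl =>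
    jacobiM_apply_eq_zero (by rw [Fin.val_last]; omega)
      fun h => hl (Fin.ext (show l.1 = n by rw [Fin.val_last] at h; omega)), hw]
  simp only [jacobiM, wVec, Fin.val_last]
  simp [show n ≠ 0 by omega, show n + 1 + 1 ≠ n by omega]
  field_simp

theorem jacobiM_mulVec_wVec_of_ne_zero_of_le (hp : 0 < p) (hq : 0 < q) (hpq : p + q = 1)
    {k : Fin (n + 2)} (hk₀ : k.1 ≠ 0) (hk : k.1 ≤ n) :
    (jacobiM p q n *ᵥ wVec p q n) k = wVec p q n k := by
  obtain ⟨j, hj⟩ : ∃ j, k.1 = j + 1 := ⟨k.1 - 1, by omega⟩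
  rw [Matrix.mulVec_apply_eq_add_of_forall_ne _ _ (a := ⟨j, by omega⟩) (b := ⟨j + 2, by omega⟩)
      (by simp [Fin.ext_iff]) fun l hl₁ hl₂ => jacobiM_apply_eq_zero
        (fun h => hl₂ (Fin.ext (by dsimp; omega))) fun h => hl₁ (Fin.ext (by dsimp; omega)),
    jacobiM_mul_wVec_of_adj hp hq hk₀ hk (by dsimp; omega),
    jacobiM_mul_wVec_of_adj hp hq hk₀ hk (by dsimp; omega),
    wVec_eq_of_ne_zero_of_le hp hk₀ hk, hj, ← mul_add, ← add_div, ← mul_div_assoc,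
    sqrt_mul_mul_pow_add_pow hp hq hpq]

theorem jacobiM_mulVec_wVec_s4 (hp : 0 < p) (hq : 0 < q) (hpq : p + q = 1) (hn : 1 ≤ n) :
    jacobiM p q n *ᵥ wVec p q n = wVec p q n := by
  ext k
  by_cases hk₀ : k.1 = 0
  · obtain rfl : k = 0 := Fin.ext hk₀
    exact jacobiM_mulVec_wVec_zero hq hn
  by_cases hk : k.1 ≤ n
  · exact jacobiM_mulVec_wVec_of_ne_zero_of_le hp hq hpq hk₀ hk
  · obtain rfl : k = Fin.last (n + 1) := Fin.ext (by rw [Fin.val_last]; omega)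
    exact jacobiM_mulVec_wVec_last hp hn

end Eigenvector

theorem jacobiM_mulVec_wVec'_general (n : ℕ) (hn : 1 ≤ n)
    (p q : ℝ) (hp0 : 0 < p) (hq0 : 0 < q) (hpq : p + q = 1) :
    (jacobiM p q n).mulVec (wVec' p q n) = -wVec' p q n := by
  unfold wVec'
  rw [Matrix.mulVec_neg_one_pow_mul _ (fun _ _ => jacobiM_apply_eq_zero_of_even),
    jacobiM_mulVec_wVec_s4 hp0 hq0 hpq hn]

/-- **Lemma.** `w'` is an eigenvector of the Jacobi matrix `J` for the eigenvalue `-1`: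
`J w' = -w'`. -/
theorem jacobiM_mulVec_wVec' (n : ℕ) (hn : 1 ≤ n)
    (p q : ℝ) (hp0 : 0 < p) (hp1 : p < 1) (hq0 : 0 < q) (hq1 : q < 1) (hpq : p + q = 1) :
    (jacobiM p q n).mulVec (wVec' p q n) = -wVec' p q n :=
  jacobiM_mulVec_wVec'_general n hn p q hp0 hq0 hpq
end

section
/- For all real λ, det(λ·I_{n+2} − J) = (λ² − 1) · (√(pq))^n · U_n(λ/(2√(pq))), where U_n is the degree-n Chebyshev polynomial of the second kind (characterized by U_n(cos θ) = sin((n+1)θ)/sin θ). In particular, the characteristic polynomial of J factors as (λ² − 1) times a polynomial whose roots are 2√(pq)·cos(mπ/(n+1)), m = 1,…,n. -/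
/-!
`λ • 1 - J` is tridiagonal, so its leading principal minors satisfy
`B (k + 2) = λ B (k + 1) - c_k² B k`, with `c_k` the `k`-th off-diagonal entry of `J`.
In the interior `c_k² = pq`, which is also the weight of the recurrence satisfied by
`D k = (√(pq))^k U_k(λ / (2√(pq)))`; comparing initial values (`c_0² = q`) gives
`B (k + 1) = λ D k - q D (k - 1)` for `k ≤ n`. The final step has weight `c_n² = p`,
and `p + q = 1` collapses `B (n + 2)` to `(λ² - 1) D n`.
-/

open Filter Finset

open Matrix Polynomial.Chebyshev

theorem Matrix.det_succ_of_castSucc_last_eq_zero {R : Type*} [CommRing R] {m : ℕ}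
    (M : Matrix (Fin (m + 1)) (Fin (m + 1)) R) (h : ∀ i : Fin m, M i.castSucc (Fin.last m) = 0) :
    M.det = M (Fin.last m) (Fin.last m) * (M.submatrix Fin.castSucc Fin.castSucc).det := by
  rw [det_succ_column M (Fin.last m), Fin.sum_univ_castSucc]
  simp [h, Fin.succAbove_last, ← two_mul, pow_mul]

section Tridiagonal

variable {R : Type*} [CommRing R] (d a b : ℕ → R)

def tridiagonal (m : ℕ) : Matrix (Fin m) (Fin m) R :=
  Matrix.of fun i j =>
    if i.1 = j.1 then d i else if i.1 + 1 = j.1 then a i else if j.1 + 1 = i.1 then b j else 0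

theorem tridiagonal_apply {m : ℕ} (i j : Fin m) : tridiagonal d a b m i j =
    if i.1 = j.1 then d i else if i.1 + 1 = j.1 then a i else if j.1 + 1 = i.1 then b j else 0 :=
  rfl

theorem tridiagonal_apply_eq_zero {m : ℕ} {i j : Fin m} (h : i.1 + 1 < j.1 ∨ j.1 + 1 < i.1) :
    tridiagonal d a b m i j = 0 := by
  rw [tridiagonal_apply, if_neg (by omega), if_neg (by omega), if_neg (by omega)]

theorem tridiagonal_submatrix_castSucc (m : ℕ) :
    (tridiagonal d a b (m + 1)).submatrix Fin.castSucc Fin.castSucc = tridiagonal d a b m :=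
  rfl

theorem det_tridiagonal_succ_succ (m : ℕ) :
    (tridiagonal d a b (m + 2)).det =
      d (m + 1) * (tridiagonal d a b (m + 1)).det - a m * b m * (tridiagonal d a b m).det := by
  -- Without the last row and the penultimate column, the last column is `a m` at the bottom.
  have hminor : ((tridiagonal d a b (m + 2)).submatrix Fin.castSucc
      (Fin.last m).castSucc.succAbove).det = a m * (tridiagonal d a b m).det := by
    rw [det_succ_of_castSucc_last_eq_zero]
    · simp only [submatrix_apply, Fin.succAbove_castSucc_self, Fin.succ_last]
      congr 1
      · simp [tridiagonal_apply]
      · congr 1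
        ext i j
        simp [tridiagonal_apply, Fin.succAbove_castSucc_of_lt _ _ j.castSucc_lt_last]
    · intro i
      simp only [submatrix_apply, Fin.succAbove_castSucc_self, Fin.succ_last]
      exact tridiagonal_apply_eq_zero d a b (by simp)
  have hsub : tridiagonal d a b (m + 2) (Fin.last (m + 1)) (Fin.last m).castSucc = b m := by
    rw [tridiagonal_apply, if_neg (by simp), if_neg (by simp; omega), if_pos (by simp)]
    rfl
  have hdiag : tridiagonal d a b (m + 2) (Fin.last (m + 1)) (Fin.last (m + 1)) = d (m + 1) := by
    simp [tridiagonal_apply]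
  rw [det_succ_row (tridiagonal d a b (m + 2)) (Fin.last (m + 1)), Fin.sum_univ_castSucc,
    Fin.sum_univ_castSucc, Finset.sum_eq_zero, Fin.succAbove_last, hminor,
    tridiagonal_submatrix_castSucc]
  · simp only [Fin.val_last, Fin.val_castSucc, odd_add_one_self, Odd.neg_one_pow, hsub, neg_mul,
      one_mul, zero_add, ← two_mul, pow_mul, even_two, Even.neg_pow, one_pow, hdiag]
    ring
  · intro j _
    rw [tridiagonal_apply_eq_zero d a b (by simp), mul_zero, zero_mul]

theorem smul_one_sub_tridiagonal (c : R) (m : ℕ) :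
    c • (1 : Matrix (Fin m) (Fin m) R) - tridiagonal d a b m =
      tridiagonal (fun i => c - d i) (-a) (-b) m := by
  ext i j
  simp only [tridiagonal_apply, Matrix.sub_apply, Matrix.smul_apply, one_apply, Fin.ext_iff,
    smul_eq_mul]
  split_ifs <;> simp

end Tridiagonal

theorem eq_of_linear_recurrence_of_le {R : Type*} [CommRing R] {f g : ℕ → R} {α β : R} {N : ℕ}
    (hf : ∀ k, k + 2 ≤ N → f (k + 2) = α * f (k + 1) - β * f k)
    (hg : ∀ k, k + 2 ≤ N → g (k + 2) = α * g (k + 1) - β * g k)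
    (h0 : f 0 = g 0) (h1 : f 1 = g 1) : ∀ k ≤ N, f k = g k := by
  intro k
  induction k using Nat.strong_induction_on with
  | _ k ih =>
    match k with
    | 0 => exact fun _ => h0
    | 1 => exact fun _ => h1
    | k + 2 =>
      intro hk
      rw [hf k hk, hg k hk, ih k (by omega) (by omega), ih (k + 1) (by omega) (by omega)]

theorem zpow_mul_eval_U_add_two {K : Type*} [Field K] {s : K} (hs : s ≠ 0) (x : K) (k : ℤ) :
    s ^ (k + 2) * (U K (k + 2)).eval x =
      2 * s * x * (s ^ (k + 1) * (U K (k + 1)).eval x) - s ^ 2 * (s ^ k * (U K k).eval x) := by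
  rw [U_add_two, zpow_add₀ hs, zpow_add₀ hs]
  simp only [Polynomial.eval_sub, Polynomial.eval_mul, Polynomial.eval_ofNat, Polynomial.eval_X,
    zpow_one, zpow_two]
  ring

noncomputable def jacobiWeight (p q : ℝ) (n i : ℕ) : ℝ :=
  if i = 0 then √q else if i = n then √p else √(p * q)

theorem jacobiM_eq_tridiagonal (p q : ℝ) (n : ℕ) :
    jacobiM p q n = tridiagonal 0 (jacobiWeight p q n) (jacobiWeight p q n) (n + 2) := by
  ext k l
  simp only [jacobiM, tridiagonal_apply, jacobiWeight, Pi.zero_apply]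
  split_ifs <;> first | rfl | omega

theorem det_smul_one_sub_jacobiM_of_recurrence {n : ℕ} (hn : 1 ≤ n) {p q : ℝ} (hp : 0 ≤ p)
    (hq : 0 ≤ q) (hpq : p + q = 1) (lam : ℝ) {D : ℤ → ℝ}
    (hD : ∀ k, D (k + 2) = lam * D (k + 1) - p * q * D k) (hD0 : D 0 = 1) (hD1 : D (-1) = 0) :
    (lam • (1 : Matrix (Fin (n + 2)) (Fin (n + 2)) ℝ) - jacobiM p q n).det =
      (lam ^ 2 - 1) * D n := by
  set w := jacobiWeight p q n
  set B : ℕ → ℝ := fun k => (tridiagonal (fun _ => lam) (-w) (-w) k).det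
  have hB : ∀ k, B (k + 2) = lam * B (k + 1) - w k ^ 2 * B k := fun k => by
    simp only [B, det_tridiagonal_succ_succ, Pi.neg_apply]
    ring
  have hD' : ∀ k : ℤ, D (k + 1) = lam * D k - p * q * D (k - 1) := fun k => by
    simpa only [sub_add_cancel, show k - 1 + 2 = k + 1 by ring] using hD (k - 1)
  have hleading : ∀ k ≤ n, B (k + 1) = lam * D k - q * D (k - 1) := by
    refine eq_of_linear_recurrence_of_le (f := fun k => B (k + 1)) (α := lam) (β := p * q)
      ?_ ?_ ?_ ?_
    · intro k hk
      have hw : w (k + 1) ^ 2 = p * q := by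
        simp only [w, jacobiWeight, if_neg (show k + 1 ≠ 0 by omega),
          if_neg (show k + 1 ≠ n by omega)]
        exact Real.sq_sqrt (mul_nonneg hp hq)
      rw [hB, hw]
    · intro k _
      have e1 : ((k + 2 : ℕ) : ℤ) - 1 = k + 1 := by push_cast; ring
      have e2 : ((k + 1 : ℕ) : ℤ) - 1 = k := by push_cast; ring
      rw [e1, e2]
      push_cast
      linear_combination lam * hD k - q * hD' k
    · simp [B, hD0, hD1, tridiagonal_apply]
    · have hw : w 0 ^ 2 = q := by simp [w, jacobiWeight, hq]
      have hD1' : D 1 = lam := by simpa [hD0, hD1] using hD (-1)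
      simp only [hB, hw]
      simp [B, hD0, hD1', tridiagonal_apply]
  have hw : w n ^ 2 = p := by simp [w, jacobiWeight, show n ≠ 0 by omega, hp]
  have hBn := hleading (n - 1) (by omega)
  have hDn := hD' (n - 1)
  rw [Nat.sub_add_cancel hn, Nat.cast_sub hn, Nat.cast_one] at hBn
  rw [sub_add_cancel] at hDn
  rw [jacobiM_eq_tridiagonal, smul_one_sub_tridiagonal]
  simp only [Pi.zero_apply, sub_zero]
  change B (n + 2) = _
  rw [hB, hw, hleading n le_rfl, hBn]
  linear_combination hDn - lam * D (n - 1) * hpq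

theorem det_charMatrix_jacobiM_general (n : ℕ) (hn : 1 ≤ n)
    (p q : ℝ) (hp0 : 0 < p) (hq0 : 0 < q) (hpq : p + q = 1) :
    ∀ lam : ℝ,
      (lam • (1 : Matrix (Fin (n + 2)) (Fin (n + 2)) ℝ) - jacobiM p q n).det =
        (lam ^ 2 - 1) * (Real.sqrt (p * q)) ^ n *
          (Polynomial.Chebyshev.U ℝ (n : ℤ)).eval (lam / (2 * Real.sqrt (p * q))) := by
  intro lam
  set s := √(p * q)
  have hs : s ≠ 0 := (Real.sqrt_pos.2 (mul_pos hp0 hq0)).ne'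
  have hs2 : s ^ 2 = p * q := Real.sq_sqrt (mul_pos hp0 hq0).le
  have hx : 2 * s * (lam / (2 * s)) = lam := by field_simp
  rw [det_smul_one_sub_jacobiM_of_recurrence hn hp0.le hq0.le hpq lam
    (D := fun k => s ^ k * (U ℝ k).eval (lam / (2 * s))) ?_ (by simp) (by simp)]
  · simp [mul_assoc]
  · intro k
    simpa only [hx, hs2] using zpow_mul_eval_U_add_two hs (lam / (2 * s)) k

/-- **Lemma (characteristic polynomial of the Jacobi matrix).** For all real `λ`,
`det(λ·I_{n+2} - J) = (λ² - 1)·(√(pq))^n·U_n(λ/(2√(pq)))`, where `U_n` is the degree-`n`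
Chebyshev polynomial of the second kind. -/
theorem det_charMatrix_jacobiM (n : ℕ) (hn : 1 ≤ n)
    (p q : ℝ) (hp0 : 0 < p) (hp1 : p < 1) (hq0 : 0 < q) (hq1 : q < 1) (hpq : p + q = 1) :
    ∀ lam : ℝ,
      (lam • (1 : Matrix (Fin (n + 2)) (Fin (n + 2)) ℝ) - jacobiM p q n).det =
        (lam ^ 2 - 1) * (Real.sqrt (p * q)) ^ n *
          (Polynomial.Chebyshev.U ℝ (n : ℤ)).eval (lam / (2 * Real.sqrt (p * q))) :=
  det_charMatrix_jacobiM_general n hn p q hp0 hq0 hpq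
end

section
/- Assume p ≠ q. For every integer k ≥ 1 and for λ ∈ {1, −1}, det(λ·I_k − √(pq)·A_k) = λ^k · (p^{k+1} − q^{k+1})/(p − q), where A_k is the adjacency matrix of the path graph on k vertices. -/
/-!
Expanding `det (a • 1 + b • A_n)` along its first row gives the three-term recurrence
`D (n + 2) = a D (n + 1) - b² D n` with `D 0 = 1`, `D 1 = a`. When `a = u + v` and `b² = u v`
this is the recurrence of `h n = (u ^ (n + 1) - v ^ (n + 1)) / (u - v)`, the characteristic roots
being `u` and `v`. For `λ = ±1` take `u = λ p`, `v = λ q`: then `u + v = λ` and `u v = p q`.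
-/

open Finset

/-- The adjacency matrix of the path graph on `k` vertices. -/
def pathAdj (k : ℕ) : Matrix (Fin k) (Fin k) ℝ :=
  fun i j => if i.1 + 1 = j.1 ∨ j.1 + 1 = i.1 then 1 else 0

noncomputable def pathTridiag (a b : ℝ) (n : ℕ) : Matrix (Fin n) (Fin n) ℝ :=
  a • 1 + b • pathAdj n

lemma pathAdj_submatrix_succ (n : ℕ) :
    (pathAdj (n + 1)).submatrix Fin.succ Fin.succ = pathAdj n := by
  ext i j
  simp [pathAdj]

lemma pathTridiag_submatrix_succ (a b : ℝ) (n : ℕ) :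
    (pathTridiag a b (n + 1)).submatrix Fin.succ Fin.succ = pathTridiag a b n := by
  ext i j
  simp [pathTridiag, Matrix.one_apply, ← pathAdj_submatrix_succ n]

lemma det_pathTridiag_submatrix_succ_succAbove_one (a b : ℝ) (n : ℕ) :
    ((pathTridiag a b (n + 2)).submatrix Fin.succ (Fin.succAbove 1)).det =
      b * (pathTridiag a b n).det := by
  have hcols : Fin.succAbove (1 : Fin (n + 2)) ∘ Fin.succ = Fin.succ ∘ Fin.succ :=
    funext Fin.one_succAbove_succ
  have hminor : ((pathTridiag a b (n + 2)).submatrix Fin.succ (Fin.succAbove 1)).submatrix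
      Fin.succ Fin.succ = pathTridiag a b n := by
    rw [Matrix.submatrix_submatrix, hcols, ← Matrix.submatrix_submatrix,
      pathTridiag_submatrix_succ, pathTridiag_submatrix_succ]
  -- the first column of this minor is `b` followed by zeros
  rw [Matrix.det_succ_column_zero, Fin.sum_univ_succ, Fin.succAbove_zero, hminor]
  simp [pathTridiag, pathAdj, Fin.ext_iff]

lemma det_pathTridiag_succ_succ (a b : ℝ) (n : ℕ) :
    (pathTridiag a b (n + 2)).det =
      a * (pathTridiag a b (n + 1)).det - b ^ 2 * (pathTridiag a b n).det := by
  rw [Matrix.det_succ_row_zero, Fin.sum_univ_succ, Fin.sum_univ_succ, Fin.succAbove_zero,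
    pathTridiag_submatrix_succ, Fin.succ_zero_eq_one,
    det_pathTridiag_submatrix_succ_succAbove_one]
  simp [pathTridiag, pathAdj, Fin.ext_iff]
  ring

theorem det_pathTridiag_mul_sub (u v b : ℝ) (hb : b ^ 2 = u * v) (n : ℕ) :
    (pathTridiag (u + v) b n).det * (u - v) = u ^ (n + 1) - v ^ (n + 1) := by
  induction n using Nat.twoStepInduction with
  | zero => simp [pathTridiag]
  | one => simp [pathTridiag, pathAdj]; ring
  | more n ih₀ ih₁ =>
    rw [det_pathTridiag_succ_succ]
    linear_combination (u + v) * ih₁ - u * v * ih₀ - (pathTridiag (u + v) b n).det * (u - v) * hb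

theorem det_charMatrix_pathAdj_at_pm_one_general
    (p q : ℝ) (hp0 : 0 < p) (hq0 : 0 < q) (hpq : p + q = 1)
    (hne : p ≠ q) (k : ℕ) (lam : ℝ) (hlam : lam = 1 ∨ lam = -1) :
    (lam • (1 : Matrix (Fin k) (Fin k) ℝ) - Real.sqrt (p * q) • pathAdj k).det =
      lam ^ k * (p ^ (k + 1) - q ^ (k + 1)) / (p - q) := by
  have hlam_sq : lam ^ 2 = 1 := by rcases hlam with rfl | rfl <;> norm_num
  have hM : lam • (1 : Matrix (Fin k) (Fin k) ℝ) - Real.sqrt (p * q) • pathAdj k =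
      pathTridiag (lam * p + lam * q) (-Real.sqrt (p * q)) k := by
    rw [pathTridiag, ← mul_add, hpq, mul_one, neg_smul, sub_eq_add_neg]
  have hb : (-Real.sqrt (p * q)) ^ 2 = lam * p * (lam * q) := by
    rw [neg_sq, Real.sq_sqrt (mul_pos hp0 hq0).le]
    linear_combination -(p * q) * hlam_sq
  have h := det_pathTridiag_mul_sub _ _ _ hb k
  rw [hM, eq_div_iff (sub_ne_zero.2 hne)]
  linear_combination lam * h -
    ((pathTridiag _ _ k).det * (p - q) - lam ^ k * (p ^ (k + 1) - q ^ (k + 1))) * hlam_sq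

/-- **Lemma.** For `p ≠ q`, every `k ≥ 1`, and `λ ∈ {1, -1}`,
`det(λ·I_k - √(pq)·A_k) = λ^k·(p^{k+1} - q^{k+1})/(p - q)`. -/
theorem det_charMatrix_pathAdj_at_pm_one
    (p q : ℝ) (hp0 : 0 < p) (hp1 : p < 1) (hq0 : 0 < q) (hq1 : q < 1) (hpq : p + q = 1)
    (hne : p ≠ q) (k : ℕ) (hk : 1 ≤ k) (lam : ℝ) (hlam : lam = 1 ∨ lam = -1) :
    (lam • (1 : Matrix (Fin k) (Fin k) ℝ) - Real.sqrt (p * q) • pathAdj k).det =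
      lam ^ k * (p ^ (k + 1) - q ^ (k + 1)) / (p - q) :=
  det_charMatrix_pathAdj_at_pm_one_general p q hp0 hq0 hpq hne k lam hlam
end

section
/- For every integer k ≥ 1 and for λ ∈ {1, −1}, det(λ·I_k − B_k) = λ^k · p^{k−1}, where B_k is the k×k real symmetric tridiagonal matrix with zero diagonal, off-diagonal entry √q between indices 0 and 1, and off-diagonal entries √(pq) between indices i and i+1 for 1 ≤ i ≤ k−2. -/
open Finset

/-- The `k × k` top-left principal submatrix `B_k` of the Jacobi matrix of the path:
zero diagonal, `B_k(0,1) = √q`, and `B_k(i,i+1) = √(pq)` for `1 ≤ i ≤ k-2`, symmetric. -/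
noncomputable def bMat (p q : ℝ) (k : ℕ) : Matrix (Fin k) (Fin k) ℝ :=
  fun i j =>
    if i.1 + 1 = j.1 then (if i.1 = 0 then Real.sqrt q else Real.sqrt (p * q))
    else if j.1 + 1 = i.1 then (if j.1 = 0 then Real.sqrt q else Real.sqrt (p * q))
    else 0

/-!
`D_k = det(λ I_k - B_k)` is a continuant: expanding along the last row gives
`D_{k+2} = λ D_{k+1} - pq D_k` for `k ≥ 1`, with `D_0 = 1`, `D_1 = λ` and `D_2 = λ² - q`.
When `λ² = 1` and `q = 1 - p`, the sequence `λ^k p^(k-1)` satisfies the same recurrence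
and initial values.
-/

namespace Matrix

variable {R : Type*} [CommRing R]

def tridiagonal (a b c : ℕ → R) (n : ℕ) : Matrix (Fin n) (Fin n) R :=
  fun i j =>
    if i.1 = j.1 then a i
    else if i.1 + 1 = j.1 then b i
    else if j.1 + 1 = i.1 then c j
    else 0

variable (a b c : ℕ → R)

theorem tridiagonal_apply_eq_zero_below {n : ℕ} {i j : Fin n} (h : j.1 + 1 < i.1) :
    tridiagonal a b c n i j = 0 := by
  simp only [tridiagonal]
  split_ifs <;> first | rfl | omega

theorem tridiagonal_apply_eq_zero_above {n : ℕ} {i j : Fin n} (h : i.1 + 1 < j.1) :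
    tridiagonal a b c n i j = 0 := by
  simp only [tridiagonal]
  split_ifs <;> first | rfl | omega

theorem tridiagonal_submatrix_castSucc (n : ℕ) :
    (tridiagonal a b c (n + 1)).submatrix Fin.castSucc Fin.castSucc = tridiagonal a b c n := by
  ext i j
  simp [tridiagonal]

theorem det_tridiagonal_succ_succ (n : ℕ) :
    (tridiagonal a b c (n + 2)).det =
      a (n + 1) * (tridiagonal a b c (n + 1)).det - b n * c n * (tridiagonal a b c n).det := by
  have hminor : ((tridiagonal a b c (n + 2)).submatrix Fin.castSucc
      (Fin.last n).castSucc.succAbove).det = b n * (tridiagonal a b c n).det := by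
    rw [det_succ_column _ (Fin.last n), Fintype.sum_eq_single (Fin.last n)]
    · have hsub : ((tridiagonal a b c (n + 2)).submatrix Fin.castSucc
          (Fin.last n).castSucc.succAbove).submatrix (Fin.last n).succAbove (Fin.last n).succAbove
          = tridiagonal a b c n := by
        ext i j
        rw [submatrix_apply, submatrix_apply, Fin.succAbove_last,
          Fin.succAbove_castSucc_of_lt _ _ (Fin.castSucc_lt_last j)]
        simp [tridiagonal]
      rw [hsub]
      simp [tridiagonal]
    · intro i hi
      have hlt : i.1 < n := Fin.val_lt_last hi
      rw [submatrix_apply, Fin.succAbove_castSucc_self, tridiagonal_apply_eq_zero_above]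
      · simp
      · simp only [Fin.val_castSucc, Fin.succ_last, Fin.val_last]; omega
  rw [det_succ_row _ (Fin.last (n + 1)), Fintype.sum_eq_add (Fin.last (n + 1)) (Fin.last n).castSucc
    (by simp [Fin.ext_iff]), Fin.succAbove_last, tridiagonal_submatrix_castSucc, hminor]
  · simp only [tridiagonal, Fin.val_last, Fin.val_castSucc, Even.add_self, Even.neg_pow,
      odd_add_one_self, Odd.neg_one_pow, ↓reduceIte, Nat.add_eq_left, one_ne_zero,
      show n + 1 + 1 ≠ n by omega]
    ring
  · rintro j ⟨hj1, hj2⟩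
    have hj : j.1 < n := by
      have hj1 := Fin.val_lt_last hj1
      have hj2 : j.1 ≠ n := fun h => hj2 (Fin.ext h)
      omega
    rw [tridiagonal_apply_eq_zero_below]
    · simp
    · simp only [Fin.val_last]; omega

theorem smul_one_sub_tridiagonal (r : R) (n : ℕ) :
    r • (1 : Matrix (Fin n) (Fin n) R) - tridiagonal a b c n =
      tridiagonal (fun i => r - a i) (-b) (-c) n := by
  ext i j
  simp only [tridiagonal, sub_apply, smul_apply, one_apply, smul_eq_mul, Fin.ext_iff]
  split_ifs <;> simp_all

end Matrix

noncomputable def bMatOffDiag (p q : ℝ) (i : ℕ) : ℝ :=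
  if i = 0 then Real.sqrt q else Real.sqrt (p * q)

theorem bMat_eq_tridiagonal (p q : ℝ) (k : ℕ) :
    bMat p q k = Matrix.tridiagonal 0 (bMatOffDiag p q) (bMatOffDiag p q) k := by
  ext i j
  simp only [bMat, Matrix.tridiagonal, bMatOffDiag, Pi.zero_apply]
  split_ifs <;> first | rfl | omega

theorem det_smul_one_sub_bMat_succ {p q lam : ℝ} (hp : 0 ≤ p) (hq : 0 ≤ q) (hpq : p + q = 1)
    (hlam : lam ^ 2 = 1) : ∀ n : ℕ, (lam • 1 - bMat p q (n + 1)).det = lam ^ (n + 1) * p ^ n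
  | 0 => by simp [bMat]
  | 1 => by
    rw [bMat_eq_tridiagonal, Matrix.smul_one_sub_tridiagonal, Matrix.det_tridiagonal_succ_succ,
      Matrix.det_fin_zero, Matrix.det_fin_one]
    simp only [Matrix.tridiagonal, bMatOffDiag, Pi.zero_apply, Pi.neg_apply, Fin.val_eq_zero,
      sub_zero, ↓reduceIte, neg_mul_neg, pow_one]
    linear_combination (1 - p) * hlam - hpq - Real.mul_self_sqrt hq
  | n + 2 => by
    have h₁ := det_smul_one_sub_bMat_succ hp hq hpq hlam (n + 1)
    have h₀ := det_smul_one_sub_bMat_succ hp hq hpq hlam n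
    simp only [bMat_eq_tridiagonal, Matrix.smul_one_sub_tridiagonal] at h₀ h₁ ⊢
    rw [Matrix.det_tridiagonal_succ_succ, h₁, h₀]
    simp only [bMatOffDiag, Pi.zero_apply, Pi.neg_apply, sub_zero, Nat.add_eq_zero_iff,
      one_ne_zero, and_false, ↓reduceIte, neg_mul_neg]
    linear_combination lam ^ (n + 1) * p ^ (n + 1) * q * hlam - lam ^ (n + 3) * p ^ (n + 1) * hpq
      - lam ^ (n + 1) * p ^ n * Real.mul_self_sqrt (mul_nonneg hp hq)

theorem det_charMatrix_bMat_at_pm_one_general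
    (p q : ℝ) (hp0 : 0 < p) (hq0 : 0 < q) (hpq : p + q = 1)
    (k : ℕ) (hk : 1 ≤ k) (lam : ℝ) (hlam : lam = 1 ∨ lam = -1) :
    (lam • (1 : Matrix (Fin k) (Fin k) ℝ) - bMat p q k).det = lam ^ k * p ^ (k - 1) := by
  obtain ⟨n, rfl⟩ : ∃ n, k = n + 1 := ⟨k - 1, by omega⟩
  exact det_smul_one_sub_bMat_succ hp0.le hq0.le hpq (by rcases hlam with rfl | rfl <;> norm_num) n

/-- **Lemma.** For every `k ≥ 1` and `λ ∈ {1, -1}`, `det(λ·I_k - B_k) = λ^k·p^{k-1}`. -/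
theorem det_charMatrix_bMat_at_pm_one
    (p q : ℝ) (hp0 : 0 < p) (hp1 : p < 1) (hq0 : 0 < q) (hq1 : q < 1) (hpq : p + q = 1)
    (k : ℕ) (hk : 1 ≤ k) (lam : ℝ) (hlam : lam = 1 ∨ lam = -1) :
    (lam • (1 : Matrix (Fin k) (Fin k) ℝ) - bMat p q k).det = lam ^ k * p ^ (k - 1) :=
  det_charMatrix_bMat_at_pm_one_general p q hp0 hq0 hpq k hk lam hlam
end

section
/- For 0 < p < 1 and q = 1 − p, (2p/π) · ∫_0^π sin²k / (1 − 4pq·cos²k) dk equals 1 if p ≥ q, and equals p/q if p < q. Equivalently, this integral equals 1 − c_0, where c_0 = 1 − p/q if p < q and c_0 = 0 otherwise. -/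
/-!
Since `p + q = 1`, `1 - 4pq cos²k = sin²k + (p - q)² cos²k` and `1 + |p - q| = 2 max p q`, so it
suffices that `∫₀^π sin²k / (sin²k + s² cos²k) dk = π / (1 + s)` for `s ≥ 0`.
For `s ∉ {0, 1}` put `c = (1 - s) / (1 + s)`, so `|c| < 1`; then
`1 - 2c cos 2k + c² = 4 (sin²k + s² cos²k) / (1 + s)²`, which makes
`k / (1 + s) - s / (1 - s²) · arctan (c sin 2k / (1 - c cos 2k))` an antiderivative defined on all
of `ℝ`. It vanishes at `0` and equals `π / (1 + s)` at `π`. For `s = 0` the integrand is `1` away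
from the endpoints, and for `s = 1` it is `sin²k`.
-/

open Real

lemma one_sub_two_mul_mul_cos_add_sq (c x : ℝ) :
    1 - 2 * c * cos x + c ^ 2 = (1 - c * cos x) ^ 2 + (c * sin x) ^ 2 := by
  linear_combination -c ^ 2 * sin_sq_add_cos_sq x

lemma hasDerivAt_arctan_mul_sin_div_one_sub_mul_cos {c : ℝ} (hc : |c| < 1) (x : ℝ) :
    HasDerivAt (fun x => arctan (c * sin x / (1 - c * cos x)))
      (c * (cos x - c) / (1 - 2 * c * cos x + c ^ 2)) x := by
  have hpos : 0 < 1 - c * cos x := by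
    have := abs_le.mp ((abs_mul c (cos x)).trans_le
      (mul_le_of_le_one_right (abs_nonneg c) (abs_cos_le_one x)))
    linarith [abs_le.mp hc.le]
  refine ((((hasDerivAt_sin x).const_mul c).div
    ((hasDerivAt_cos x).const_mul c |>.const_sub 1) hpos.ne').arctan).congr_deriv ?_
  simp only [Pi.div_apply]
  rw [one_sub_two_mul_mul_cos_add_sq]
  field_simp
  linear_combination -c ^ 2 * sin_sq_add_cos_sq x

section

variable {s : ℝ}

lemma sin_sq_add_sq_mul_cos_sq_pos (hs : s ≠ 0) (k : ℝ) :
    0 < sin k ^ 2 + s ^ 2 * cos k ^ 2 := by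
  rcases eq_or_ne (cos k) 0 with h | h
  · simp [h, sin_sq]
  · positivity

lemma abs_one_sub_div_one_add_lt_one (hs : 0 < s) : |(1 - s) / (1 + s)| < 1 := by
  rw [abs_div, abs_of_pos (by linarith : 0 < 1 + s), div_lt_one (by linarith), abs_lt]
  constructor <;> linarith

lemma sin_sq_div_sin_sq_add_sq_mul_cos_sq_eq (hs : 0 < s) (hs1 : s ≠ 1) (k : ℝ) :
    sin k ^ 2 / (sin k ^ 2 + s ^ 2 * cos k ^ 2) =
      1 / (1 + s) - s / ((1 + s) * (1 - s)) *
        ((1 - s) / (1 + s) * (cos (2 * k) - (1 - s) / (1 + s)) /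
          (1 - 2 * ((1 - s) / (1 + s)) * cos (2 * k) + ((1 - s) / (1 + s)) ^ 2) * 2) := by
  have hD := sin_sq_add_sq_mul_cos_sq_pos hs.ne' k
  have h1s : 1 - s ≠ 0 := sub_ne_zero.mpr hs1.symm
  have hden : 1 - 2 * ((1 - s) / (1 + s)) * cos (2 * k) + ((1 - s) / (1 + s)) ^ 2 =
      4 * (sin k ^ 2 + s ^ 2 * cos k ^ 2) / (1 + s) ^ 2 := by
    rw [cos_two_mul]
    field_simp
    linear_combination -4 * sin_sq_add_cos_sq k
  rw [hden]
  field_simp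
  rw [cos_two_mul]
  linear_combination 4 * s * sin_sq_add_cos_sq k

lemma integral_sin_sq_div_sin_sq_add_sq_mul_cos_sq_of_ne_one (hs : 0 < s) (hs1 : s ≠ 1) :
    ∫ k in (0)..π, sin k ^ 2 / (sin k ^ 2 + s ^ 2 * cos k ^ 2) = π / (1 + s) := by
  set c := (1 - s) / (1 + s)
  have hF : ∀ k, HasDerivAt
      (fun k => k / (1 + s) - s / ((1 + s) * (1 - s)) *
        arctan (c * sin (2 * k) / (1 - c * cos (2 * k))))
      (sin k ^ 2 / (sin k ^ 2 + s ^ 2 * cos k ^ 2)) k := fun k => by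
    rw [sin_sq_div_sin_sq_add_sq_mul_cos_sq_eq hs hs1]
    exact ((hasDerivAt_id k).div_const _).sub <|
      ((hasDerivAt_arctan_mul_sin_div_one_sub_mul_cos (abs_one_sub_div_one_add_lt_one hs)
        (2 * k)).comp k (hasDerivAt_const_mul 2)).const_mul _
  rw [intervalIntegral.integral_eq_sub_of_hasDerivAt (fun k _ => hF k)]
  · simp
  · exact (continuous_sin.pow 2).div (by fun_prop)
      (fun k => (sin_sq_add_sq_mul_cos_sq_pos hs.ne' k).ne') |>.intervalIntegrable _ _

lemma integral_sin_sq_div_sin_sq_add_sq_mul_cos_sq (hs : 0 ≤ s) :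
    ∫ k in (0)..π, sin k ^ 2 / (sin k ^ 2 + s ^ 2 * cos k ^ 2) = π / (1 + s) := by
  rcases hs.eq_or_lt with rfl | hs
  · have hone : ∀ k ∈ Set.Ioo 0 π, sin k ^ 2 / (sin k ^ 2 + 0 ^ 2 * cos k ^ 2) = 1 :=
      fun k hk => by simp [(sin_pos_of_pos_of_lt_pi hk.1 hk.2).ne']
    rw [intervalIntegral.integral_of_le pi_pos.le, MeasureTheory.integral_Ioc_eq_integral_Ioo,
      MeasureTheory.setIntegral_congr_fun measurableSet_Ioo hone]
    simp [pi_pos.le]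
  rcases eq_or_ne s 1 with rfl | hs1
  · norm_num [integral_sin_sq]
  · exact integral_sin_sq_div_sin_sq_add_sq_mul_cos_sq_of_ne_one hs hs1

end

theorem integral_sin_sq_div_one_sub_four_pq_cos_sq_general
    (p q : ℝ) (hq : q = 1 - p) :
    (2 * p / Real.pi) *
        ∫ k in (0:ℝ)..Real.pi, Real.sin k ^ 2 / (1 - 4 * p * q * Real.cos k ^ 2) =
      if p < q then p / q else 1 := by
  have hden : ∀ k, 1 - 4 * p * q * cos k ^ 2 = sin k ^ 2 + |p - q| ^ 2 * cos k ^ 2 := fun k => by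
    rw [sq_abs, hq]
    linear_combination -(sin_sq_add_cos_sq k)
  simp_rw [hden, integral_sin_sq_div_sin_sq_add_sq_mul_cos_sq (abs_nonneg _)]
  split_ifs with h
  · have hq0 : q ≠ 0 := by linarith
    rw [abs_of_neg (sub_neg.mpr h), show 1 + -(p - q) = 2 * q by linarith]
    field_simp
  · have hp0 : p ≠ 0 := by linarith
    rw [abs_of_nonneg (by linarith), show 1 + (p - q) = 2 * p by linarith]
    field_simp

/-- **Lemma (total mass of the absolutely continuous part).** For `0 < p < 1` and
`q = 1 - p`, `(2p/π)·∫_0^π sin²k/(1 - 4pq·cos²k) dk` equals `1` if `p ≥ q` and `p/q`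
if `p < q`; equivalently, it equals `1 - c_0`. -/
theorem integral_sin_sq_div_one_sub_four_pq_cos_sq
    (p q : ℝ) (hp0 : 0 < p) (hp1 : p < 1) (hq : q = 1 - p) :
    (2 * p / Real.pi) *
        ∫ k in (0:ℝ)..Real.pi, Real.sin k ^ 2 / (1 - 4 * p * q * Real.cos k ^ 2) =
      if p < q then p / q else 1 :=
  integral_sin_sq_div_one_sub_four_pq_cos_sq_general p q hq
end
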